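/- arXiv:2512.21518 — 7 statements merged into one kernel-verified Lean document; each statement's English description precedes it below -/
import Mathlib

section
/- Let h : ℝ⁴ → ℝ⁵ be defined by h(x₁,x₂,x₃,x₄) = (x₁, x₂, x₃, x₁x₄ + x₂x₄², x₃x₄ + x₄³). Then h is a proper map: the preimage of any compact set in ℝ⁵ is compact. -/
/-- The standard 2-Morin map `h(x₁,x₂,x₃,x₄) = (x₁,x₂,x₃, x₁x₄+x₂x₄², x₃x₄+x₄³)`
is proper: the preimage of any compact subset of ℝ⁵ is compact. -/
theorem morin_map_proper :
    ∀ K : Set (Fin 5 → ℝ), IsCompact K →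
      IsCompact ((fun x : Fin 4 → ℝ =>
        ![x 0, x 1, x 2, x 0 * x 3 + x 1 * x 3 ^ 2, x 2 * x 3 + x 3 ^ 3]) ⁻¹' K) := by
  intro K hK
  have hcont : Continuous (fun x : Fin 4 → ℝ =>
      ![x 0, x 1, x 2, x 0 * x 3 + x 1 * x 3 ^ 2, x 2 * x 3 + x 3 ^ 3]) := by
    refine continuous_pi fun i => ?_
    fin_cases i <;> simp <;> fun_prop
  have hclosed := hK.isClosed.preimage hcont
  obtain ⟨M, hM⟩ := hK.isBounded.exists_norm_le
  set N := max M 0 with hN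
  have hN0 : 0 ≤ N := le_max_right _ _
  have hMN : M ≤ N := le_max_left _ _
  refine Metric.isCompact_iff_isClosed_bounded.mpr ⟨hclosed, ?_⟩
  rw [isBounded_iff_forall_norm_le]
  refine ⟨max N (max 1 (2 * N)), fun x hx => ?_⟩
  have hx' : ‖![x 0, x 1, x 2, x 0 * x 3 + x 1 * x 3 ^ 2, x 2 * x 3 + x 3 ^ 3]‖ ≤ N :=
    (hM _ hx).trans hMN
  have key : ∀ i : Fin 5,
      ‖(![x 0, x 1, x 2, x 0 * x 3 + x 1 * x 3 ^ 2, x 2 * x 3 + x 3 ^ 3]) i‖ ≤ N :=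
    fun i => (norm_le_pi_norm _ i).trans hx'
  have h0 : |x 0| ≤ N := by simpa [Real.norm_eq_abs] using key 0
  have h1 : |x 1| ≤ N := by simpa [Real.norm_eq_abs] using key 1
  have h2 : |x 2| ≤ N := by simpa [Real.norm_eq_abs] using key 2
  have h4 : |x 2 * x 3 + x 3 ^ 3| ≤ N := by simpa [Real.norm_eq_abs] using key 4
  have h3 : |x 3| ≤ max 1 (2 * N) := by
    rcases le_or_gt (|x 3|) 1 with h | h
    · exact h.trans (le_max_left _ _)
    · refine le_max_of_le_right ?_
      have hcube : |x 3| ^ 3 ≤ N + N * |x 3| := by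
        have e : x 3 ^ 3 = (x 2 * x 3 + x 3 ^ 3) - x 2 * x 3 := by ring
        calc |x 3| ^ 3 = |x 3 ^ 3| := (abs_pow _ _).symm
          _ = |(x 2 * x 3 + x 3 ^ 3) - x 2 * x 3| := by rw [← e]
          _ ≤ |x 2 * x 3 + x 3 ^ 3| + |x 2 * x 3| := abs_sub _ _
          _ ≤ N + N * |x 3| := by
              have : |x 2 * x 3| = |x 2| * |x 3| := abs_mul _ _
              have h23 : |x 2| * |x 3| ≤ N * |x 3| :=
                mul_le_mul_of_nonneg_right h2 (abs_nonneg _)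
              linarith
      by_contra hc
      push_neg at hc
      nlinarith [hcube, mul_pos (show (0:ℝ) < |x 3| - 1 by linarith)
        (show (0:ℝ) < |x 3| by linarith), sq_nonneg (|x 3|),
        mul_pos (show (0:ℝ) < |x 3| - 2 * N by linarith) (show (0:ℝ) < |x 3| by linarith)]
  rw [pi_norm_le_iff_of_nonneg (le_trans hN0 (le_max_left _ _))]
  intro i
  fin_cases i <;> simp only [Real.norm_eq_abs, Matrix.cons_val_zero, Matrix.cons_val_one,
    Matrix.head_cons, Matrix.cons_val_two, Matrix.tail_cons, Matrix.cons_val_three,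
    Matrix.cons_val_fin_one, Fin.isValue]
  · exact h0.trans (le_max_left _ _)
  · exact h1.trans (le_max_left _ _)
  · exact h2.trans (le_max_left _ _)
  · exact h3.trans (le_max_right _ _)
end

section
/- Let a(t) = −y₄ + y₁t + y₂t² and b(t) = −y₅ + y₃t + t³ with real parameters y₁,...,y₅. If a and b have a common root t ∈ ℂ \ ℝ, then y₂y₄ + y₁² + y₂²y₃ = 0 (the first principal subresultant coefficient of a and b vanishes) and the resultant Res_t(a,b) = 0. -/
/-- If `a(t) = −y₄ + y₁t + y₂t²` and `b(t) = −y₅ + y₃t + t³` (with real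
parameters) have a common non-real complex root, then the first principal
subresultant coefficient `y₂y₄ + y₁² + y₂²y₃` vanishes, and so does the
resultant `Res_t(a,b)`. -/
theorem subresultant_vanishes_of_nonreal_common_root
    (y₁ y₂ y₃ y₄ y₅ : ℝ) (t : ℂ) (ht : t.im ≠ 0)
    (ha : -(y₄ : ℂ) + y₁ * t + y₂ * t ^ 2 = 0)
    (hb : -(y₅ : ℂ) + y₃ * t + t ^ 3 = 0) :
    y₂ * y₄ + y₁ ^ 2 + y₂ ^ 2 * y₃ = 0 ∧
      -y₁ ^ 2 * y₃ * y₄ - y₂ ^ 2 * y₃ ^ 2 * y₄ - 2 * y₂ * y₃ * y₄ ^ 2 - y₄ ^ 3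
        + y₁ ^ 3 * y₅ + y₁ * y₂ ^ 2 * y₃ * y₅ + 3 * y₁ * y₂ * y₄ * y₅
        + y₂ ^ 3 * y₅ ^ 2 = 0 := by
  set x := t.re with hx
  set y := t.im with hy
  have h1 := congrArg Complex.im ha
  have h2 := congrArg Complex.re ha
  have h3 := congrArg Complex.im hb
  have h4 := congrArg Complex.re hb
  simp only [pow_succ, pow_zero, one_mul, Complex.add_im, Complex.add_re,
    Complex.mul_im, Complex.mul_re, Complex.neg_im, Complex.neg_re,
    Complex.ofReal_im, Complex.ofReal_re, Complex.zero_im, Complex.zero_re,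
    ← hx, ← hy] at h1 h2 h3 h4
  -- extract y₁ and y₃
  have hy1 : y₁ = -2 * y₂ * x := by
    have : (y₁ + 2 * y₂ * x) * y = 0 := by linarith [h1]
    rcases mul_eq_zero.mp this with h | h
    · linarith
    · exact absurd h ht
  have hy3 : y₃ = y ^ 2 - 3 * x ^ 2 := by
    have : (y₃ + 3 * x ^ 2 - y ^ 2) * y = 0 := by ring_nf; ring_nf at h3; linarith
    rcases mul_eq_zero.mp this with h | h
    · linarith
    · exact absurd h ht
  have hy4 : y₄ = -y₂ * (x ^ 2 + y ^ 2) := by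
    rw [hy1] at h2; nlinarith [h2]
  have hy5 : y₅ = -2 * x * (x ^ 2 + y ^ 2) := by
    rw [hy3] at h4; nlinarith [h4]
  subst hy1 hy3 hy4 hy5
  constructor <;> ring
end

section
/- Fix k ≥ 2 and x = (x₀,...,x_{k−1}) ∈ ℝ^k. Let A(v) = v^{k+1} + x_{k−1}v^{k−1} + ... + x₁v + x₀. Then x lies in the image of the standard A_k map h(v, x₂,...,x_{k−1}) = (k v^{k+1} + Σ_{i=2}^{k−1}(i−1)x_i v^i, −(k+1)v^k − Σ_{i=2}^{k−1} i x_i v^{i−1}, x₂, ..., x_{k−1}) if and only if A(v) has a real double root, i.e. there exists v ∈ ℝ with A(v) = A'(v) = 0. -/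
/-!
Writing `h₀, h₁` for the first two components of the `A_k` map, one has the identities
`x₁ - h₁(v) = A'(v)` and `x₀ - h₀(v) = A(v) - v A'(v)`, because
`(i - 1) vⁱ = v · (i vⁱ⁻¹) - vⁱ`; both vanish exactly when `A(v) = A'(v) = 0`.
-/

open Finset

theorem sum_range_eq_add_add_sum_Ico {M : Type*} [AddCommMonoid M] (f : ℕ → M) {k : ℕ}
    (hk : 2 ≤ k) : ∑ i ∈ range k, f i = f 0 + f 1 + ∑ i ∈ Ico 2 k, f i := by
  rw [← sum_range_add_sum_Ico f hk, sum_range_succ, sum_range_one]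

theorem hasDerivAt_pow_add_sum {𝕜 : Type*} [NontriviallyNormedField 𝕜] (n : ℕ) (s : Finset ℕ)
    (c : ℕ → 𝕜) (v : 𝕜) :
    HasDerivAt (fun w : 𝕜 => w ^ n + ∑ i ∈ s, c i * w ^ i)
      (n * v ^ (n - 1) + ∑ i ∈ s, i * c i * v ^ (i - 1)) v := by
  refine ((hasDerivAt_pow n v).add
    (HasDerivAt.fun_sum fun i _ => (hasDerivAt_pow i v).const_mul (c i))).congr_deriv ?_
  exact congrArg _ (sum_congr rfl fun i _ => by ring)

theorem sum_sub_one_mul_pow {R : Type*} [CommRing R] (s : Finset ℕ) (c : ℕ → R) (v : R) :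
    ∑ i ∈ s, ((i : R) - 1) * c i * v ^ i =
      v * ∑ i ∈ s, i * c i * v ^ (i - 1) - ∑ i ∈ s, c i * v ^ i := by
  rw [mul_sum, ← sum_sub_distrib]
  refine sum_congr rfl fun i _ => ?_
  cases i with
  | zero => simp
  | succ i => push_cast; ring

/-- `x = (x₀,…,x_{k−1})` lies in the image of the standard `A_k` map if and
only if `A(v) = v^{k+1} + x_{k−1}v^{k−1} + ⋯ + x₁v + x₀` has a real double
root, i.e. a common real zero of `A` and `A'`. -/
theorem Ak_image_iff_double_root (k : ℕ) (hk : 2 ≤ k) (x : ℕ → ℝ) :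
    (∃ v : ℝ,
        x 0 = k * v ^ (k + 1) + ∑ i ∈ Finset.Ico 2 k, ((i : ℝ) - 1) * x i * v ^ i ∧
        x 1 = -((k + 1 : ℝ) * v ^ k) - ∑ i ∈ Finset.Ico 2 k, (i : ℝ) * x i * v ^ (i - 1)) ↔
      (∃ v : ℝ,
        v ^ (k + 1) + ∑ i ∈ Finset.range k, x i * v ^ i = 0 ∧
        deriv (fun w : ℝ => w ^ (k + 1) + ∑ i ∈ Finset.range k, x i * w ^ i) v = 0) := by
  refine exists_congr fun v => ?_
  set S := ∑ i ∈ Ico 2 k, x i * v ^ i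
  set T := ∑ i ∈ Ico 2 k, (i : ℝ) * x i * v ^ (i - 1)
  have hA : v ^ (k + 1) + ∑ i ∈ range k, x i * v ^ i = v ^ (k + 1) + x 0 + x 1 * v + S := by
    rw [sum_range_eq_add_add_sum_Ico _ hk]
    simp only [pow_zero, pow_one, mul_one]
    ring
  have hA' : deriv (fun w : ℝ => w ^ (k + 1) + ∑ i ∈ range k, x i * w ^ i) v =
      (k + 1) * v ^ k + x 1 + T := by
    rw [(hasDerivAt_pow_add_sum (k + 1) (range k) x v).deriv, sum_range_eq_add_add_sum_Ico _ hk]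
    simp only [Nat.cast_add, Nat.cast_one, Nat.add_sub_cancel, Nat.cast_zero, zero_mul,
      one_mul, Nat.sub_self, pow_zero, mul_one]
    ring
  rw [hA, hA', sum_sub_one_mul_pow]
  constructor
  · rintro ⟨h0, h1⟩
    exact ⟨by linear_combination h0 + v * h1, by linear_combination h1⟩
  · rintro ⟨hA0, hA'0⟩
    exact ⟨by linear_combination hA0 - v * hA'0, by linear_combination hA'0⟩
end

section
/- Fix k ≥ 2. Let A(v) = v^{k+1} + x_{k−1}v^{k−1} + ... + x₁v + x₀, B(v) = A'(v), Θ(x) = Res_v(A, B), and let L = {x ∈ ℝ^k : A and B have a common complex root but no common real root}. Then the Hausdorff dimension of L is at most k − 2. -/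
/-!
If `A` and `A'` share a root `α` but no real one, `α` is a non-real double root of `A`, so
`A = Q² q` with `Q = (X - α)(X - ᾱ)` real and `q` monic of degree `k - 3` (for `k < 3` there is
no room for `Q²` and the set is empty). Since `A` has no `X^k` term, the second coefficient of
`q` is `4 Re α`. Hence `x` lies in the image of the smooth map
`(Im α, lower coefficients of q) ↦ coefficients of Q² q` on `ℝ × ℝ^(k-3)`, and a `C¹` image of
`ℝ^(k-2)` has Hausdorff dimension at most `k - 2`.
-/

open Polynomial

namespace Polynomial

section MonicOfCoeffs

variable {R : Type*} [CommSemiring R] {m : ℕ}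

noncomputable def monicOfCoeffs (d : ℕ) (c : Fin m → R) : R[X] :=
  X ^ d + ∑ i : Fin m, C (c i) * X ^ (i : ℕ)

theorem coeff_sum_fin_C_mul_X_pow (c : Fin m → R) (n : ℕ) :
    (∑ i : Fin m, C (c i) * X ^ (i : ℕ)).coeff n = if h : n < m then c ⟨n, h⟩ else 0 := by
  simp only [finsetSum_coeff, coeff_C_mul_X_pow]
  split_ifs with h
  · rw [Finset.sum_eq_single ⟨n, h⟩ (fun i _ hi => if_neg fun hn => hi (Fin.ext hn.symm))
      (by simp), if_pos rfl]
  · exact Finset.sum_eq_zero fun i _ => if_neg (by omega)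

variable {d : ℕ} (c : Fin m → R)

theorem monicOfCoeffs_monic (h : m ≤ d) : (monicOfCoeffs d c).Monic :=
  monic_X_pow_add ((degree_sum_fin_lt c).trans_le (by exact_mod_cast h))

theorem natDegree_monicOfCoeffs [Nontrivial R] (h : m ≤ d) :
    (monicOfCoeffs d c).natDegree = d := by
  rw [monicOfCoeffs, natDegree_add_eq_left_of_degree_lt, natDegree_X_pow]
  exact (degree_sum_fin_lt c).trans_le (by rw [degree_X_pow]; exact_mod_cast h)

theorem coeff_monicOfCoeffs (h : m ≤ d) (i : Fin m) : (monicOfCoeffs d c).coeff i = c i := by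
  rw [monicOfCoeffs, coeff_add, coeff_X_pow, if_neg (by omega), coeff_sum_fin_C_mul_X_pow,
    dif_pos i.isLt, zero_add]

theorem nextCoeff_monicOfCoeffs_succ [Nontrivial R] :
    (monicOfCoeffs (m + 1) c).nextCoeff = 0 := by
  rw [nextCoeff_of_natDegree_pos (by rw [natDegree_monicOfCoeffs c m.le_succ]; omega),
    natDegree_monicOfCoeffs c m.le_succ, monicOfCoeffs, coeff_add, coeff_X_pow, if_neg (by omega),
    coeff_sum_fin_C_mul_X_pow, dif_neg (by omega), add_zero]

theorem aeval_monicOfCoeffs {S : Type*} [CommSemiring S] [Algebra R S] (s : S) :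
    aeval s (monicOfCoeffs d c) = s ^ d + ∑ i : Fin m, algebraMap R S (c i) * s ^ (i : ℕ) := by
  simp [monicOfCoeffs]

theorem Monic.eq_monicOfCoeffs {q : R[X]} (hq : q.Monic) (hd : q.natDegree = d) :
    q = monicOfCoeffs d fun i : Fin d => q.coeff i := by
  subst hd
  rw [monicOfCoeffs, Fin.sum_univ_eq_sum_range (fun i => C (q.coeff i) * X ^ i)]
  exact hq.as_sum

end MonicOfCoeffs

section RealQuadratic

noncomputable def realQuadratic (z : ℂ) : ℝ[X] :=
  X ^ 2 - C (2 * z.re) * X + C (‖z‖ ^ 2)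

variable (z : ℂ)

theorem realQuadratic_monic : (realQuadratic z).Monic := by
  rw [realQuadratic, sub_add_eq_add_sub, add_sub_assoc]
  refine monic_X_pow_add ((degree_sub_le _ _).trans_lt (max_lt ?_ ?_))
  · exact degree_C_le.trans_lt (by norm_num)
  · exact (degree_C_mul_X_le _).trans_lt (by norm_num)

theorem natDegree_realQuadratic : (realQuadratic z).natDegree = 2 := by
  rw [realQuadratic, sub_eq_add_neg, ← neg_mul, ← C_neg, ← one_mul (X ^ 2), ← C_1]
  exact natDegree_quadratic one_ne_zero

theorem nextCoeff_realQuadratic : (realQuadratic z).nextCoeff = -(2 * z.re) := by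
  rw [nextCoeff_of_natDegree_pos (by rw [natDegree_realQuadratic]; norm_num),
    natDegree_realQuadratic]
  simp only [realQuadratic, coeff_add, coeff_sub, coeff_X_pow, coeff_C_mul, coeff_X, coeff_C]
  norm_num

theorem aeval_realQuadratic_self : aeval z (realQuadratic z) = 0 := by
  simp [realQuadratic, ← Complex.mul_conj', Complex.re_eq_add_conj]
  ring

variable {z}

theorem aeval_derivative_realQuadratic_ne_zero (hz : z.im ≠ 0) :
    aeval z (derivative (realQuadratic z)) ≠ 0 := by
  intro h
  have h_im := congrArg Complex.im h
  simp [realQuadratic, derivative_pow] at h_im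
  exact hz (by linarith)

theorem sq_realQuadratic_dvd_of_aeval_derivative_eq_zero {p : ℝ[X]} (hz : z.im ≠ 0)
    (h0 : aeval z p = 0) (h1 : aeval z (derivative p) = 0) : realQuadratic z ^ 2 ∣ p := by
  obtain ⟨g, rfl⟩ : realQuadratic z ∣ p := p.quadratic_dvd_of_aeval_eq_zero_im_ne_zero h0 hz
  -- `Q'(z) ≠ 0`, so the double root `z` of `Q g` is a root of `g`.
  have hg : aeval z g = 0 := by
    rw [derivative_mul, map_add, map_mul, map_mul, aeval_realQuadratic_self, zero_mul,
      add_zero] at h1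
    exact (mul_eq_zero.1 h1).resolve_left (aeval_derivative_realQuadratic_ne_zero hz)
  rw [sq]
  exact mul_dvd_mul_left _ (g.quadratic_dvd_of_aeval_eq_zero_im_ne_zero hg hz)

theorem im_ne_zero_of_not_exists_real_double_root {p : ℝ[X]} (h0 : aeval z p = 0)
    (h1 : aeval z (derivative p) = 0)
    (hreal : ¬∃ v : ℝ, aeval v p = 0 ∧ aeval v (derivative p) = 0) : z.im ≠ 0 := by
  intro hz
  have hz_real : algebraMap ℝ ℂ z.re = z := Complex.ext (by simp) (by simp [hz])
  rw [← hz_real, aeval_algebraMap_apply] at h0 h1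
  exact hreal ⟨z.re, (map_eq_zero_iff _ (algebraMap ℝ ℂ).injective).1 h0,
    (map_eq_zero_iff _ (algebraMap ℝ ℂ).injective).1 h1⟩

end RealQuadratic

section ContDiffCoeffs

def ContDiffCoeffs (𝕜 : Type*) [NontriviallyNormedField 𝕜] {E : Type*} [NormedAddCommGroup E]
    [NormedSpace 𝕜 E] (r : WithTop ℕ∞) (F : E → 𝕜[X]) : Prop :=
  ∀ n, ContDiff 𝕜 r fun y => (F y).coeff n

variable {𝕜 E : Type*} [NontriviallyNormedField 𝕜] [NormedAddCommGroup E] [NormedSpace 𝕜 E]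
  {r : WithTop ℕ∞} {F G : E → 𝕜[X]}

namespace ContDiffCoeffs

theorem const (p : 𝕜[X]) : ContDiffCoeffs 𝕜 r fun _ : E => p := fun _ => contDiff_const

theorem C {f : E → 𝕜} (hf : ContDiff 𝕜 r f) : ContDiffCoeffs 𝕜 r fun y => C (f y) := by
  intro n
  simp only [coeff_C]
  split_ifs
  exacts [hf, contDiff_const]

theorem add (hF : ContDiffCoeffs 𝕜 r F) (hG : ContDiffCoeffs 𝕜 r G) :
    ContDiffCoeffs 𝕜 r fun y => F y + G y := fun n => by
  simpa only [coeff_add] using (hF n).add (hG n)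

theorem sub (hF : ContDiffCoeffs 𝕜 r F) (hG : ContDiffCoeffs 𝕜 r G) :
    ContDiffCoeffs 𝕜 r fun y => F y - G y := fun n => by
  simpa only [coeff_sub] using (hF n).sub (hG n)

theorem mul (hF : ContDiffCoeffs 𝕜 r F) (hG : ContDiffCoeffs 𝕜 r G) :
    ContDiffCoeffs 𝕜 r fun y => F y * G y := fun n => by
  simpa only [coeff_mul] using ContDiff.sum fun ij _ => (hF ij.1).mul (hG ij.2)

theorem pow (hF : ContDiffCoeffs 𝕜 r F) (k : ℕ) : ContDiffCoeffs 𝕜 r fun y => F y ^ k := by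
  induction k with
  | zero => simpa only [pow_zero] using const 1
  | succ k ih => simpa only [pow_succ] using ih.mul hF

theorem finsetSum {ι : Type*} (s : Finset ι) {F : ι → E → 𝕜[X]}
    (hF : ∀ i ∈ s, ContDiffCoeffs 𝕜 r (F i)) : ContDiffCoeffs 𝕜 r fun y => ∑ i ∈ s, F i y :=
  fun n => by simpa only [finsetSum_coeff] using ContDiff.sum fun i hi => hF i hi n

theorem contDiff_nextCoeff (hF : ContDiffCoeffs 𝕜 r F) {d : ℕ} (hd : ∀ y, (F y).natDegree = d) :
    ContDiff 𝕜 r fun y => (F y).nextCoeff := by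
  simp only [nextCoeff, hd]
  split_ifs
  exacts [contDiff_const, hF _]

theorem contDiff_toLp_coeff (hF : ContDiffCoeffs 𝕜 r F) (k : ℕ) :
    ContDiff 𝕜 r fun y => WithLp.toLp 2 fun i : Fin k => (F y).coeff i :=
  PiLp.contDiff_toLp.comp (contDiff_pi.2 fun i => hF i)

theorem monicOfCoeffs {m : ℕ} {c : E → Fin m → 𝕜} (hc : ContDiff 𝕜 r c) (d : ℕ) :
    ContDiffCoeffs 𝕜 r fun y => monicOfCoeffs d (c y) :=
  (const _).add <| finsetSum _ fun i _ => (C (contDiff_apply 𝕜 𝕜 i |>.comp hc)).mul (const _)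

theorem realQuadratic {E : Type*} [NormedAddCommGroup E] [NormedSpace ℝ E] {z : E → ℂ}
    (hre : ContDiff ℝ r fun y => (z y).re) (him : ContDiff ℝ r fun y => (z y).im) :
    ContDiffCoeffs ℝ r fun y => realQuadratic (z y) := by
  simp only [Polynomial.realQuadratic, Complex.sq_norm, Complex.normSq_apply]
  exact ((const _).sub ((C (contDiff_const.mul hre)).mul (const X))).add
    (C ((hre.mul hre).add (him.mul him)))

end ContDiffCoeffs

end ContDiffCoeffs

end Polynomial

noncomputable def doubleRootParam (k : ℕ) (y : ℝ × (Fin (k - 3) → ℝ)) : ℝ[X] :=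
  realQuadratic ⟨(monicOfCoeffs (k - 3) y.2).nextCoeff / 4, y.1⟩ ^ 2 * monicOfCoeffs (k - 3) y.2

noncomputable def doubleRootMap (k : ℕ) (y : ℝ × (Fin (k - 3) → ℝ)) :
    EuclideanSpace ℝ (Fin k) :=
  WithLp.toLp 2 fun i => (doubleRootParam k y).coeff i

theorem contDiff_doubleRootMap (k : ℕ) : ContDiff ℝ 1 (doubleRootMap k) := by
  have hq := ContDiffCoeffs.monicOfCoeffs (r := 1)
    (contDiff_snd (𝕜 := ℝ) (E := ℝ) (F := Fin (k - 3) → ℝ)) (k - 3)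
  have hre := (hq.contDiff_nextCoeff fun y => natDegree_monicOfCoeffs y.2 le_rfl).div_const 4
  exact (((ContDiffCoeffs.realQuadratic hre contDiff_fst).pow 2).mul hq).contDiff_toLp_coeff k

theorem exists_eq_doubleRootParam {k : ℕ} (x : Fin k → ℝ) {z : ℂ} (hz : z.im ≠ 0)
    (h0 : aeval z (monicOfCoeffs (k + 1) x) = 0)
    (h1 : aeval z (derivative (monicOfCoeffs (k + 1) x)) = 0) :
    3 ≤ k ∧ ∃ y, monicOfCoeffs (k + 1) x = doubleRootParam k y := by
  have hQ := (realQuadratic_monic z).pow 2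
  obtain ⟨q, hq⟩ := sq_realQuadratic_dvd_of_aeval_derivative_eq_zero hz h0 h1
  have hqm : q.Monic := hQ.of_mul_monic_left (hq ▸ monicOfCoeffs_monic x k.le_succ)
  have hdeg := natDegree_monicOfCoeffs x k.le_succ
  rw [hq, hQ.natDegree_mul hqm, natDegree_pow, natDegree_realQuadratic] at hdeg
  have hnext := nextCoeff_monicOfCoeffs_succ x
  rw [hq, hQ.nextCoeff_mul hqm, (realQuadratic_monic z).nextCoeff_pow, nextCoeff_realQuadratic,
    nsmul_eq_mul, Nat.cast_ofNat] at hnext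
  have hz' : (⟨q.nextCoeff / 4, z.im⟩ : ℂ) = z := Complex.ext (by simp; linarith) rfl
  refine ⟨by omega, ⟨z.im, fun i => q.coeff i⟩, ?_⟩
  rw [doubleRootParam, ← hqm.eq_monicOfCoeffs (by omega), hz', hq]

theorem mem_range_doubleRootMap {k : ℕ} {x : EuclideanSpace ℝ (Fin k)}
    (hC : ∃ z : ℂ, aeval z (monicOfCoeffs (k + 1) x) = 0 ∧
      aeval z (derivative (monicOfCoeffs (k + 1) x)) = 0)
    (hreal : ¬∃ v : ℝ, aeval v (monicOfCoeffs (k + 1) x) = 0 ∧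
      aeval v (derivative (monicOfCoeffs (k + 1) x)) = 0) :
    3 ≤ k ∧ x ∈ Set.range (doubleRootMap k) := by
  obtain ⟨z, h0, h1⟩ := hC
  obtain ⟨hk, y, hy⟩ :=
    exists_eq_doubleRootParam x (im_ne_zero_of_not_exists_real_double_root h0 h1 hreal) h0 h1
  refine ⟨hk, y, ?_⟩
  ext i
  simp [doubleRootMap, ← hy, coeff_monicOfCoeffs _ k.le_succ]

theorem Ak_exceptional_set_dim_general (k : ℕ) :
    dimH {x : EuclideanSpace ℝ (Fin k) |
        (∃ z : ℂ, (z ^ (k + 1) + ∑ i : Fin k, (x i : ℂ) * z ^ (i : ℕ) = 0) ∧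
          deriv (fun w : ℂ => w ^ (k + 1) + ∑ i : Fin k, (x i : ℂ) * w ^ (i : ℕ)) z = 0) ∧
        ¬ ∃ v : ℝ, (v ^ (k + 1) + ∑ i : Fin k, x i * v ^ (i : ℕ) = 0) ∧
          deriv (fun w : ℝ => w ^ (k + 1) + ∑ i : Fin k, x i * w ^ (i : ℕ)) v = 0} ≤
      (k - 2 : ℕ) := by
  have hC (x : Fin k → ℝ) (z : ℂ) : z ^ (k + 1) + ∑ i : Fin k, (x i : ℂ) * z ^ (i : ℕ) =
      aeval z (monicOfCoeffs (k + 1) x) := by simp [aeval_monicOfCoeffs]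
  have hR (x : Fin k → ℝ) (v : ℝ) : v ^ (k + 1) + ∑ i : Fin k, x i * v ^ (i : ℕ) =
      aeval v (monicOfCoeffs (k + 1) x) := by simp [aeval_monicOfCoeffs]
  simp only [hC, hR, Polynomial.deriv_aeval]
  by_cases hk : 3 ≤ k
  · calc _ ≤ dimH (Set.range (doubleRootMap k)) :=
          dimH_mono fun x hx => (mem_range_doubleRootMap hx.1 hx.2).2
      _ ≤ Module.finrank ℝ (ℝ × (Fin (k - 3) → ℝ)) := (contDiff_doubleRootMap k).dimH_range_le
      _ = (k - 2 : ℕ) := by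
          rw [Module.finrank_prod, Module.finrank_self, Module.finrank_fin_fun]
          exact_mod_cast (by omega : 1 + (k - 3) = k - 2)
  · calc _ ≤ dimH (∅ : Set (EuclideanSpace ℝ (Fin k))) :=
          dimH_mono fun x hx => absurd (mem_range_doubleRootMap hx.1 hx.2).1 hk
      _ ≤ (k - 2 : ℕ) := by simp

/-- For `A(v) = v^{k+1} + x_{k−1}v^{k−1} + ⋯ + x₀` and `B = A'`, the set of
parameters `x ∈ ℝ^k` for which `A` and `B` have a common complex root but no
common real root has Hausdorff dimension at most `k − 2`. -/
theorem Ak_exceptional_set_dim (k : ℕ) (hk : 2 ≤ k) :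
    dimH {x : EuclideanSpace ℝ (Fin k) |
        (∃ z : ℂ, (z ^ (k + 1) + ∑ i : Fin k, (x i : ℂ) * z ^ (i : ℕ) = 0) ∧
          deriv (fun w : ℂ => w ^ (k + 1) + ∑ i : Fin k, (x i : ℂ) * w ^ (i : ℕ)) z = 0) ∧
        ¬ ∃ v : ℝ, (v ^ (k + 1) + ∑ i : Fin k, x i * v ^ (i : ℕ) = 0) ∧
          deriv (fun w : ℝ => w ^ (k + 1) + ∑ i : Fin k, x i * w ^ (i : ℕ)) v = 0} ≤
      (k - 2 : ℕ) :=
  Ak_exceptional_set_dim_general k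
end

section
/- Let A(v) = v⁴ + x₂v² + x₁v + x₀ and B(v) = 4v³ + 2x₂v + x₁. Then Res_v(A, B) = 256x₀³ − 128x₂²x₀² + (144x₁²x₂ + 16x₂⁴)x₀ − 27x₁⁴ − 4x₁²x₂³, and the zero set of this polynomial in ℝ³ equals the image of the swallowtail map h(v,x₂) = (3v⁴ + x₂v², −4v³ − 2x₂v, x₂) together with the curve {(t²/4, 0, t) : t > 0}, these two sets being disjoint. -/
set_option maxRecDepth 8000

private lemma detExp7 (M : Matrix (Fin 7) (Fin 7) ℝ) :
    M.det = ∑ i : Fin 7, (-1) ^ (i : ℕ) * M i 0 * (M.submatrix i.succAbove Fin.succ).det := by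
  rw [Matrix.det_succ_column_zero]
private lemma detExp6 (M : Matrix (Fin 6) (Fin 6) ℝ) :
    M.det = ∑ i : Fin 6, (-1) ^ (i : ℕ) * M i 0 * (M.submatrix i.succAbove Fin.succ).det := by
  rw [Matrix.det_succ_column_zero]
private lemma detExp5 (M : Matrix (Fin 5) (Fin 5) ℝ) :
    M.det = ∑ i : Fin 5, (-1) ^ (i : ℕ) * M i 0 * (M.submatrix i.succAbove Fin.succ).det := by
  rw [Matrix.det_succ_column_zero]
private lemma detExp4 (M : Matrix (Fin 4) (Fin 4) ℝ) :
    M.det = ∑ i : Fin 4, (-1) ^ (i : ℕ) * M i 0 * (M.submatrix i.succAbove Fin.succ).det := by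
  rw [Matrix.det_succ_column_zero]

/-- Every real cubic `4b³ + 2pb + c` has a real root (intermediate value theorem). -/
private lemma swcCubicRoot (p c : ℝ) : ∃ b : ℝ, 4 * b ^ 3 + 2 * p * b + c = 0 := by
  set f : ℝ → ℝ := fun b => 4 * b ^ 3 + 2 * p * b + c with hf
  set M : ℝ := 1 + |p| + |c| with hM
  have hp0 : (0:ℝ) ≤ |p| := abs_nonneg p
  have hc0 : (0:ℝ) ≤ |c| := abs_nonneg c
  have hM1 : 1 ≤ M := by simp only [hM]; linarith
  have hp : p ≤ |p| := le_abs_self p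
  have hp' : -|p| ≤ p := neg_abs_le p
  have hc : c ≤ |c| := le_abs_self c
  have hc' : -|c| ≤ c := neg_abs_le c
  have h1 : f (-M) ≤ 0 := by
    simp only [hf]
    nlinarith [mul_le_mul_of_nonneg_right hp (by linarith : (0:ℝ) ≤ M),
      sq_nonneg M, mul_le_mul_of_nonneg_right hM1 (by nlinarith : (0:ℝ) ≤ M^2)]
  have h2 : 0 ≤ f M := by
    simp only [hf]
    nlinarith [mul_le_mul_of_nonneg_right hp' (by linarith : (0:ℝ) ≤ M),
      sq_nonneg M, mul_le_mul_of_nonneg_right hM1 (by nlinarith : (0:ℝ) ≤ M^2)]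
  have hcont : ContinuousOn f (Set.Icc (-M) M) := by fun_prop
  obtain ⟨b, -, hb⟩ := intermediate_value_Icc (by linarith : (-M) ≤ M) hcont ⟨h1, h2⟩
  exact ⟨b, hb⟩

set_option maxHeartbeats 4000000 in
/-- For `A(v) = v⁴ + x₂v² + x₁v + x₀` and `B = A'`, the resultant (Sylvester
determinant) equals the swallowtail discriminant Θ, and the zero set of Θ in
ℝ³ is the disjoint union of the image of the swallowtail map
`h(v,x₂) = (3v⁴ + x₂v², −4v³ − 2x₂v, x₂)` and the curve `{(t²/4, 0, t) : t > 0}`. -/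
theorem swallowtail_resultant_and_image :
    (∀ x₀ x₁ x₂ : ℝ,
      Matrix.det !![1, 0, x₂, x₁, x₀, 0, 0;
                    0, 1, 0, x₂, x₁, x₀, 0;
                    0, 0, 1, 0, x₂, x₁, x₀;
                    4, 0, 2 * x₂, x₁, 0, 0, 0;
                    0, 4, 0, 2 * x₂, x₁, 0, 0;
                    0, 0, 4, 0, 2 * x₂, x₁, 0;
                    0, 0, 0, 4, 0, 2 * x₂, x₁] =
        256 * x₀ ^ 3 - 128 * x₂ ^ 2 * x₀ ^ 2 + (144 * x₁ ^ 2 * x₂ + 16 * x₂ ^ 4) * x₀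
          - 27 * x₁ ^ 4 - 4 * x₁ ^ 2 * x₂ ^ 3) ∧
    {q : ℝ × ℝ × ℝ |
        256 * q.1 ^ 3 - 128 * q.2.2 ^ 2 * q.1 ^ 2
          + (144 * q.2.1 ^ 2 * q.2.2 + 16 * q.2.2 ^ 4) * q.1
          - 27 * q.2.1 ^ 4 - 4 * q.2.1 ^ 2 * q.2.2 ^ 3 = 0} =
      Set.range (fun p : ℝ × ℝ => (3 * p.1 ^ 4 + p.2 * p.1 ^ 2,
          -4 * p.1 ^ 3 - 2 * p.2 * p.1, p.2)) ∪
        {q : ℝ × ℝ × ℝ | ∃ t : ℝ, 0 < t ∧ q = (t ^ 2 / 4, 0, t)} ∧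
    Set.range (fun p : ℝ × ℝ => (3 * p.1 ^ 4 + p.2 * p.1 ^ 2,
          -4 * p.1 ^ 3 - 2 * p.2 * p.1, p.2)) ∩
        {q : ℝ × ℝ × ℝ | ∃ t : ℝ, 0 < t ∧ q = (t ^ 2 / 4, 0, t)} = ∅ := by
  refine ⟨?_, ?_, ?_⟩
  · -- The Sylvester determinant computation
    intro x₀ x₁ x₂
    simp only [detExp7, Fin.sum_univ_succ, Matrix.submatrix_apply, Matrix.submatrix_submatrix,
      Function.comp_apply, Fin.zero_succAbove, Fin.succ_succAbove_zero, Fin.succ_succAbove_succ,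
      Matrix.of_apply, Matrix.cons_val', Matrix.cons_val_zero, Matrix.cons_val_succ,
      Matrix.empty_val', Matrix.cons_val_fin_one, Matrix.head_cons, Matrix.head_fin_const,
      Fin.val_zero, Fin.val_succ, Fin.sum_univ_zero, pow_zero, pow_one, one_mul, mul_zero,
      zero_mul, add_zero, zero_add, neg_mul, neg_zero, mul_one]
    simp only [detExp6, Fin.sum_univ_succ, Matrix.submatrix_apply, Matrix.submatrix_submatrix,
      Function.comp_apply, Fin.zero_succAbove, Fin.succ_succAbove_zero, Fin.succ_succAbove_succ,
      Matrix.of_apply, Matrix.cons_val', Matrix.cons_val_zero, Matrix.cons_val_succ,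
      Matrix.empty_val', Matrix.cons_val_fin_one, Matrix.head_cons, Matrix.head_fin_const,
      Fin.val_zero, Fin.val_succ, Fin.sum_univ_zero, pow_zero, pow_one, one_mul, mul_zero,
      zero_mul, add_zero, zero_add, neg_mul, neg_zero, mul_one]
    simp only [detExp5, Fin.sum_univ_succ, Matrix.submatrix_apply, Matrix.submatrix_submatrix,
      Function.comp_apply, Fin.zero_succAbove, Fin.succ_succAbove_zero, Fin.succ_succAbove_succ,
      Matrix.of_apply, Matrix.cons_val', Matrix.cons_val_zero, Matrix.cons_val_succ,
      Matrix.empty_val', Matrix.cons_val_fin_one, Matrix.head_cons, Matrix.head_fin_const,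
      Fin.val_zero, Fin.val_succ, Fin.sum_univ_zero, pow_zero, pow_one, one_mul, mul_zero,
      zero_mul, add_zero, zero_add, neg_mul, neg_zero, mul_one]
    simp only [detExp4, Fin.sum_univ_succ, Matrix.submatrix_apply, Matrix.submatrix_submatrix,
      Function.comp_apply, Fin.zero_succAbove, Fin.succ_succAbove_zero, Fin.succ_succAbove_succ,
      Matrix.of_apply, Matrix.cons_val', Matrix.cons_val_zero, Matrix.cons_val_succ,
      Matrix.empty_val', Matrix.cons_val_fin_one, Matrix.head_cons, Matrix.head_fin_const,
      Fin.val_zero, Fin.val_succ, Fin.sum_univ_zero, pow_zero, pow_one, one_mul, mul_zero,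
      zero_mul, add_zero, zero_add, neg_mul, neg_zero, mul_one]
    simp only [Matrix.det_fin_three, ← Fin.succ_zero_eq_one, ← Fin.succ_one_eq_two,
      Matrix.submatrix_apply, Matrix.submatrix_submatrix,
      Function.comp_apply, Fin.zero_succAbove, Fin.succ_succAbove_zero, Fin.succ_succAbove_succ,
      Matrix.of_apply, Matrix.cons_val', Matrix.cons_val_zero, Matrix.cons_val_succ,
      Matrix.empty_val', Matrix.cons_val_fin_one, Matrix.head_cons, Matrix.head_fin_const,
      Fin.val_zero, Fin.val_succ, Fin.sum_univ_zero, pow_zero, pow_one, one_mul, mul_zero,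
      zero_mul, add_zero, zero_add, neg_mul, neg_zero, mul_one]
    ring
  · -- The zero set of Θ is image ∪ curve
    ext ⟨a, c, p⟩
    simp only [Set.mem_setOf_eq, Set.mem_union, Set.mem_range, Prod.exists, Prod.mk.injEq]
    constructor
    · intro h
      obtain ⟨b, hb⟩ := swcCubicRoot p c
      have hc : c = -4 * b ^ 3 - 2 * p * b := by linarith
      subst hc
      have hfac : 256 * (a - (3 * b ^ 4 + p * b ^ 2)) *
          (a ^ 2 - (p ^ 2 / 2 - b ^ 2 * p - 3 * b ^ 4) * a
            + (p ^ 4 / 16 + 7 / 4 * b ^ 2 * p ^ 3 + 17 / 2 * b ^ 4 * p ^ 2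
               + 15 * b ^ 6 * p + 9 * b ^ 8)) = 0 := by linear_combination h
      rcases mul_eq_zero.mp hfac with h1 | h2
      · have ha : 3 * b ^ 4 + p * b ^ 2 = a := by linarith
        exact Or.inl ⟨b, p, ha, by ring, rfl⟩
      · have hsq : (2 * a - (p ^ 2 / 2 - b ^ 2 * p - 3 * b ^ 4)) ^ 2
            = -(b ^ 2 * (3 * b ^ 2 + 2 * p) ^ 3) := by linear_combination 4 * h2
        by_cases hu : 3 * b ^ 2 + 2 * p ≤ 0
        · set e : ℝ := Real.sqrt (-(3 * b ^ 2 + 2 * p)) with hedef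
          have he : e ^ 2 = -(3 * b ^ 2 + 2 * p) := Real.sq_sqrt (by linarith)
          have hprod : (a - (3 * ((-b + e) / 2) ^ 4 + p * ((-b + e) / 2) ^ 2)) *
              (a - (3 * ((-b - e) / 2) ^ 4 + p * ((-b - e) / 2) ^ 2)) = 0 := by
            linear_combination h2 +
              (-(3:ℝ)/8 * e ^ 2 * a + 9/256 * e ^ 6 + 1/4 * p * a + 3/128 * p * e ^ 4
                + 1/64 * p ^ 2 * e ^ 2 - 1/32 * p ^ 3 - 9/8 * b ^ 2 * a
                - 63/256 * b ^ 2 * e ^ 4 + 21/64 * b ^ 2 * p * e ^ 2 - 53/64 * b ^ 2 * p ^ 2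
                + 243/256 * b ^ 4 * e ^ 2 - 381/128 * b ^ 4 * p - 765/256 * b ^ 6) * he
          rcases mul_eq_zero.mp hprod with h3 | h3
          · refine Or.inl ⟨(-b + e) / 2, p, by linarith, ?_, rfl⟩
            linear_combination (-(1:ℝ)/2 * e + 3/2 * b) * he
          · refine Or.inl ⟨(-b - e) / 2, p, by linarith, ?_, rfl⟩
            linear_combination ((1:ℝ)/2 * e + 3/2 * b) * he
        · push_neg at hu
          have hb2 : b ^ 2 ≤ 0 := by
            nlinarith [sq_nonneg (2 * a - (p ^ 2 / 2 - b ^ 2 * p - 3 * b ^ 4)),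
              pow_pos hu 3, sq_nonneg b]
          have hb0 : b = 0 := by
            have : b ^ 2 = 0 := le_antisymm hb2 (sq_nonneg b)
            exact pow_eq_zero_iff (two_ne_zero).elim |>.mp this
          subst hb0
          have hp : 0 < p := by nlinarith
          have ha : a = p ^ 2 / 4 := by
            have h4 : (2 * a - p ^ 2 / 2) ^ 2 = 0 := by linear_combination hsq
            have h5 : 2 * a - p ^ 2 / 2 = 0 := pow_eq_zero_iff two_ne_zero |>.mp h4
            linarith
          exact Or.inr ⟨p, hp, ha, by ring, rfl⟩
    · rintro (⟨v, w, h1, h2, h3⟩ | ⟨t, ht, h1, h2, h3⟩)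
      · subst h1; subst h2; subst h3; ring
      · subst h1; subst h2; subst h3; ring
  · -- Disjointness
    rw [Set.eq_empty_iff_forall_notMem]
    rintro ⟨a, c, p⟩ ⟨⟨⟨v, w⟩, hv⟩, ⟨t, ht, hq⟩⟩
    simp only [Prod.mk.injEq] at hv hq
    obtain ⟨h1, h2, h3⟩ := hv
    obtain ⟨h4, h5, h6⟩ := hq
    subst h3; subst h6; subst h4; subst h5
    have hv0 : v = 0 := by
      have hmul : v * (4 * v ^ 2 + 2 * w) = 0 := by linarith
      have hpos : 4 * v ^ 2 + 2 * w > 0 := by positivity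
      exact (mul_eq_zero.mp hmul).resolve_right (ne_of_gt hpos)
    subst hv0
    nlinarith [h1]
end

section
/- Fix k ≥ 4 and σ ∈ {±1}. The standard D_k map h : ℝ^{k−1} → ℝ^k defined by h(u,v,x₃,...,x_{k−1}) = (σ·2u²v + (k−2)v^{k−1} + Σ_{i=3}^{k−1}(i−2)x_i v^{i−1}, −σ·2uv, −σu² − (k−1)v^{k−2} − Σ_{i=3}^{k−1}(i−1)x_i v^{i−2}, x₃, ..., x_{k−1}) is proper, each fiber h⁻¹(x) has at most k points, and h⁻¹(0) = {0}. -/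
open Polynomial

lemma zeroset_card (p : Polynomial ℝ) (hp : p ≠ 0) :
    {x : ℝ | p.eval x = 0}.Finite ∧ {x : ℝ | p.eval x = 0}.ncard ≤ p.natDegree := by
  have hset : {x : ℝ | p.eval x = 0} = ↑p.roots.toFinset := by
    ext x; simp [Polynomial.mem_roots, hp, IsRoot]
  constructor
  · rw [hset]; exact (p.roots.toFinset).finite_toSet
  · rw [hset, Set.ncard_coe_finset]
    exact le_trans (Multiset.toFinset_card_le _) (Polynomial.card_roots' p)

lemma fiber_le {α : Type*} (S : Set α) (f : α → ℝ) (p : Polynomial ℝ) (hp : p ≠ 0)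
    (hmap : ∀ a ∈ S, p.eval (f a) = 0) (hinj : Set.InjOn f S) :
    S.Finite ∧ S.ncard ≤ p.natDegree := by
  obtain ⟨hfin, hcard⟩ := zeroset_card p hp
  have hmt : Set.MapsTo f S {x : ℝ | p.eval x = 0} := hmap
  have hSfin : S.Finite := Set.Finite.of_finite_image (hfin.subset (Set.image_subset_iff.2 hmt)) hinj
  exact ⟨hSfin, le_trans (Set.ncard_le_ncard_of_injOn f hmt hinj hfin) hcard⟩

set_option maxHeartbeats 1000000 in
/-- The standard `D_k` map is proper, each fiber has at most `k` points, and
the fiber over the origin is exactly the origin. -/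
theorem Dk_map_properties (k : ℕ) (hk : 4 ≤ k) (σ : ℝ) (hσ : σ = 1 ∨ σ = -1) :
    let h : ℝ × ℝ × (Fin (k - 3) → ℝ) → ℝ × ℝ × ℝ × (Fin (k - 3) → ℝ) :=
      fun p =>
        (σ * 2 * p.1 ^ 2 * p.2.1 + ((k : ℝ) - 2) * p.2.1 ^ (k - 1) +
            ∑ j : Fin (k - 3), ((j : ℕ) + 1 : ℝ) * p.2.2 j * p.2.1 ^ ((j : ℕ) + 2),
         -(σ * 2 * p.1 * p.2.1),
         -(σ * p.1 ^ 2) - ((k : ℝ) - 1) * p.2.1 ^ (k - 2) -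
            ∑ j : Fin (k - 3), ((j : ℕ) + 2 : ℝ) * p.2.2 j * p.2.1 ^ ((j : ℕ) + 1),
         p.2.2)
    (∀ K : Set (ℝ × ℝ × ℝ × (Fin (k - 3) → ℝ)), IsCompact K → IsCompact (h ⁻¹' K)) ∧
    (∀ y, Set.Finite (h ⁻¹' {y}) ∧ (h ⁻¹' {y}).ncard ≤ k) ∧
    h ⁻¹' {0} = {0} := by
  obtain ⟨m, rfl⟩ : ∃ m, k = m + 3 := ⟨k - 3, by omega⟩
  intro h
  have hσ2 : σ ^ 2 = 1 := by rcases hσ with rfl | rfl <;> norm_num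
  have hσ0 : σ ≠ 0 := by rcases hσ with rfl | rfl <;> norm_num
  have hmem : ∀ (u v : ℝ) (x : Fin m → ℝ) (y₁ y₂ y₃ : ℝ) (w : Fin m → ℝ),
      ((u, v, x) ∈ h ⁻¹' {(y₁, y₂, y₃, w)}) ↔
      (σ * 2 * u ^ 2 * v + (((m + 3 : ℕ) : ℝ) - 2) * v ^ (m + 2) +
          ∑ j : Fin m, ((j : ℕ) + 1 : ℝ) * x j * v ^ ((j : ℕ) + 2) = y₁ ∧
       -(σ * 2 * u * v) = y₂ ∧
       -(σ * u ^ 2) - (((m + 3 : ℕ) : ℝ) - 1) * v ^ (m + 1) -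
          ∑ j : Fin m, ((j : ℕ) + 2 : ℝ) * x j * v ^ ((j : ℕ) + 1) = y₃ ∧
       x = w) := by
    intro u v x y₁ y₂ y₃ w
    show h (u, v, x) = (y₁, y₂, y₃, w) ↔ _
    simp only [h, Prod.mk.injEq]
    exact Iff.rfl
  refine ⟨?_, ?_, ?_⟩
  · -- properness
    intro K hK
    have hcont : Continuous h := by unfold h; fun_prop
    obtain ⟨M0, hM0⟩ := hK.isBounded.subset_closedBall 0
    set M := max M0 1 with hM
    have hM1 : (1:ℝ) ≤ M := by rw [hM]; exact le_max_right _ _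
    have hM0' : (0:ℝ) ≤ M := by linarith
    have hKM : ∀ z ∈ K, ‖z‖ ≤ M := by
      intro z hz
      have := hM0 hz
      rw [Metric.mem_closedBall, dist_zero_right] at this
      exact this.trans (by rw [hM]; exact le_max_left _ _)
    set Bv : ℝ := (2 + ((m:ℝ)+3)^2) * M^2 with hBv
    have hBv1 : (1:ℝ) ≤ Bv := by rw [hBv]; nlinarith [sq_nonneg ((m:ℝ)+3), hM1]
    have hBvp : (0:ℝ) ≤ Bv := by linarith
    set Du : ℝ := M + ((m:ℝ)+2)*Bv^(m+1) + ((m:ℝ)+3)^2*M*Bv^(m+1) with hDu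
    have hBvpow : (0:ℝ) ≤ Bv^(m+1) := by positivity
    have hDu1 : (1:ℝ) ≤ Du := by
      have h1 : (0:ℝ) ≤ ((m:ℝ)+2)*Bv^(m+1) := by positivity
      have h2 : (0:ℝ) ≤ ((m:ℝ)+3)^2*M*Bv^(m+1) := by positivity
      linarith
    have habsσ : |σ| = 1 := by rcases hσ with rfl | rfl <;> norm_num
    apply Metric.isCompact_of_isClosed_isBounded (hK.isClosed.preimage hcont)
    apply Bornology.IsBounded.subset (Metric.isBounded_closedBall
      (x := (0 : ℝ × ℝ × (Fin (m + 3 - 3) → ℝ))) (r := Bv + Du + M))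
    rintro ⟨u, v, x⟩ hp
    have hz := hKM _ hp
    have hp1 : |σ * 2 * u ^ 2 * v + (((m + 3 : ℕ) : ℝ) - 2) * v ^ (m + 2) +
        ∑ j : Fin m, ((j : ℕ) + 1 : ℝ) * x j * v ^ ((j : ℕ) + 2)| ≤ M :=
      le_trans (norm_fst_le (h (u, v, x))) hz
    have hp2 : |-(σ * 2 * u * v)| ≤ M :=
      le_trans (le_trans (norm_fst_le ((h (u, v, x)).2)) (norm_snd_le (h (u, v, x)))) hz
    have hp3 : |-(σ * u ^ 2) - (((m + 3 : ℕ) : ℝ) - 1) * v ^ (m + 1) -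
        ∑ j : Fin m, ((j : ℕ) + 2 : ℝ) * x j * v ^ ((j : ℕ) + 1)| ≤ M :=
      le_trans (le_trans (norm_fst_le ((h (u, v, x)).2.2))
        (le_trans (norm_snd_le ((h (u, v, x)).2)) (norm_snd_le (h (u, v, x))))) hz
    have hpx : ∀ j : Fin m, |x j| ≤ M := fun j =>
      le_trans (le_trans (norm_le_pi_norm x j)
        (le_trans (norm_snd_le ((h (u, v, x)).2.2))
          (le_trans (norm_snd_le ((h (u, v, x)).2)) (norm_snd_le (h (u, v, x)))))) hz
    -- bound on |v|
    have hv : |v| ≤ Bv := by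
      rcases le_or_gt |v| 1 with hv1 | hv1
      · exact hv1.trans hBv1
      · have h1v : (1:ℝ) ≤ |v| := hv1.le
        have hvpos : (0:ℝ) < |v| := by linarith
        have habs2 : |u| * |v| ≤ M / 2 := by
          have e : |-(σ * 2 * u * v)| = 2 * (|u| * |v|) := by
            rw [abs_neg, abs_mul, abs_mul, abs_mul, habsσ]
            norm_num
            try ring
          have h2 := hp2
          rw [e] at h2
          linarith
        have hu1 : |u| ≤ M / 2 := by
          calc |u| ≤ |u| * |v| := le_mul_of_one_le_right (abs_nonneg u) h1v
            _ ≤ M / 2 := habs2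
        have hcube : |σ * 2 * u ^ 2 * v| ≤ M ^ 2 := by
          have e : |σ * 2 * u ^ 2 * v| = 2 * (u ^ 2 * |v|) := by
            rw [abs_mul, abs_mul, abs_mul, habsσ, abs_pow, sq_abs]
            norm_num
            try ring
          have e2 : u ^ 2 * |v| = (|u| * |v|) * |u| := by rw [← sq_abs]; ring
          rw [e, e2]
          nlinarith [mul_le_mul habs2 hu1 (abs_nonneg u) (by linarith : (0:ℝ) ≤ M / 2), hM0']
        have hsumb : |∑ j : Fin m, ((j : ℕ) + 1 : ℝ) * x j * v ^ ((j : ℕ) + 2)| ≤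
            ((m:ℝ)+3)^2 * M * |v|^(m+1) := by
          calc |∑ j : Fin m, ((j : ℕ) + 1 : ℝ) * x j * v ^ ((j : ℕ) + 2)|
              ≤ ∑ j : Fin m, |((j : ℕ) + 1 : ℝ) * x j * v ^ ((j : ℕ) + 2)| :=
                Finset.abs_sum_le_sum_abs _ _
            _ ≤ ∑ _j : Fin m, ((m:ℝ)+1) * M * |v|^(m+1) := by
                refine Finset.sum_le_sum fun j _ => ?_
                rw [abs_mul, abs_mul, abs_pow,
                  abs_of_nonneg (by positivity : (0:ℝ) ≤ ((j : ℕ) : ℝ) + 1)]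
                have t1 : ((j : ℕ) : ℝ) + 1 ≤ (m:ℝ) + 1 := by
                  have : ((j : ℕ) : ℝ) ≤ (m:ℝ) := Nat.cast_le.mpr (le_of_lt j.isLt)
                  linarith
                have t3 : |v| ^ ((j : ℕ) + 2) ≤ |v| ^ (m+1) :=
                  pow_le_pow_right₀ h1v (by have := j.isLt; omega)
                have hx0 : (0:ℝ) ≤ |x j| := abs_nonneg _
                exact mul_le_mul (mul_le_mul t1 (hpx j) hx0 (by positivity))
                  t3 (by positivity) (by positivity)
            _ = (m:ℝ) * (((m:ℝ)+1) * M * |v|^(m+1)) := by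
                rw [Finset.sum_const, Finset.card_univ, Fintype.card_fin, nsmul_eq_mul]
            _ ≤ ((m:ℝ)+3)^2 * M * |v|^(m+1) := by
                have hvp : (0:ℝ) ≤ |v|^(m+1) := by positivity
                have hmn : (0:ℝ) ≤ (m:ℝ) := Nat.cast_nonneg m
                nlinarith [mul_nonneg hM0' hvp, mul_nonneg (mul_nonneg hmn hM0') hvp]
        have hrw2 : (((m + 3 : ℕ) : ℝ) - 2) = (m:ℝ) + 1 := by push_cast; ring
        have hmain : ((m:ℝ)+1) * |v|^(m+2) ≤ M + M^2 + ((m:ℝ)+3)^2 * M * |v|^(m+1) := by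
          have e2 : ((m:ℝ)+1) * |v|^(m+2) = |(((m + 3 : ℕ):ℝ) - 2) * v ^ (m + 2)| := by
            rw [abs_mul, abs_pow, hrw2, abs_of_nonneg (by positivity : (0:ℝ) ≤ (m:ℝ)+1)]
          have hA := abs_le.1 hp1
          have hB := abs_le.1 hcube
          have hC := abs_le.1 hsumb
          rw [e2, abs_le]
          constructor <;> [linarith; linarith]
        have hle1 : (1:ℝ) ≤ |v|^(m+1) := by
          have := pow_le_pow_left₀ (by norm_num : (0:ℝ) ≤ 1) h1v (m+1)
          rwa [one_pow] at this
        have hfinal : |v| * |v|^(m+1) ≤ Bv * |v|^(m+1) := by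
          have hvmul : |v| * |v|^(m+1) = |v|^(m+2) := (pow_succ' |v| (m+1)).symm
          have hstep : |v|^(m+2) ≤ ((m:ℝ)+1)*|v|^(m+2) :=
            le_mul_of_one_le_left (by positivity)
              (by have : (0:ℝ) ≤ (m:ℝ) := Nat.cast_nonneg m; linarith)
          have hMM : (0:ℝ) ≤ M^2 - M := by nlinarith [hM1, hM0']
          have hfin2 : M + M^2 + ((m:ℝ)+3)^2*M*|v|^(m+1) ≤ Bv * |v|^(m+1) := by
            rw [hBv]
            nlinarith [mul_nonneg (mul_nonneg hM0' hM0') (sub_nonneg.2 hle1),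
              mul_nonneg hM0' (sub_nonneg.2 hM1),
              mul_nonneg (mul_nonneg (sq_nonneg ((m:ℝ)+3))
                (pow_nonneg (abs_nonneg v) (m+1))) hMM]
          rw [hvmul]
          linarith
        exact le_of_mul_le_mul_right hfinal (by positivity)
    -- bound on |u|
    have hv2 : |v|^(m+1) ≤ Bv^(m+1) := pow_le_pow_left₀ (abs_nonneg v) hv (m+1)
    have hxvj : ∀ n : ℕ, n ≤ m + 1 → |v|^n ≤ Bv^(m+1) := by
      intro n hn
      calc |v|^n ≤ Bv^n := pow_le_pow_left₀ (abs_nonneg v) hv n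
        _ ≤ Bv^(m+1) := pow_le_pow_right₀ hBv1 hn
    have hu : |u| ≤ Du := by
      have hsumb2 : |∑ j : Fin m, ((j : ℕ) + 2 : ℝ) * x j * v ^ ((j : ℕ) + 1)| ≤
          ((m:ℝ)+3)^2 * M * Bv^(m+1) := by
        calc |∑ j : Fin m, ((j : ℕ) + 2 : ℝ) * x j * v ^ ((j : ℕ) + 1)|
            ≤ ∑ j : Fin m, |((j : ℕ) + 2 : ℝ) * x j * v ^ ((j : ℕ) + 1)| :=
              Finset.abs_sum_le_sum_abs _ _
          _ ≤ ∑ _j : Fin m, ((m:ℝ)+2) * M * Bv^(m+1) := by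
              refine Finset.sum_le_sum fun j _ => ?_
              rw [abs_mul, abs_mul, abs_pow,
                abs_of_nonneg (by positivity : (0:ℝ) ≤ ((j : ℕ) : ℝ) + 2)]
              have t1 : ((j : ℕ) : ℝ) + 2 ≤ (m:ℝ) + 2 := by
                have : ((j : ℕ) : ℝ) ≤ (m:ℝ) := Nat.cast_le.mpr (le_of_lt j.isLt)
                linarith
              have t3 : |v| ^ ((j : ℕ) + 1) ≤ Bv ^ (m+1) :=
                hxvj ((j : ℕ) + 1) (by have := j.isLt; omega)
              have hx0 : (0:ℝ) ≤ |x j| := abs_nonneg _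
              exact mul_le_mul (mul_le_mul t1 (hpx j) hx0 (by positivity))
                t3 (by positivity) (by positivity)
          _ = (m:ℝ) * (((m:ℝ)+2) * M * Bv^(m+1)) := by
              rw [Finset.sum_const, Finset.card_univ, Fintype.card_fin, nsmul_eq_mul]
          _ ≤ ((m:ℝ)+3)^2 * M * Bv^(m+1) := by
              have hmn : (0:ℝ) ≤ (m:ℝ) := Nat.cast_nonneg m
              nlinarith [mul_nonneg hM0' hBvpow, mul_nonneg (mul_nonneg hmn hM0') hBvpow]
      have hCv : |(((m + 3 : ℕ):ℝ) - 1) * v^(m+1)| ≤ ((m:ℝ)+2) * Bv^(m+1) := by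
        have hc : (((m + 3 : ℕ):ℝ) - 1) = (m:ℝ) + 2 := by push_cast; ring
        rw [abs_mul, abs_pow, hc, abs_of_nonneg (by positivity : (0:ℝ) ≤ (m:ℝ)+2)]
        exact mul_le_mul_of_nonneg_left hv2 (by positivity)
      have hu2 : u^2 ≤ Du := by
        have e2 : |σ * u ^ 2| = u ^ 2 := by
          rw [abs_mul, habsσ, one_mul, abs_of_nonneg (sq_nonneg u)]
        have hA3 := abs_le.1 hp3
        have hS2 := abs_le.1 hsumb2
        have hCv' := abs_le.1 hCv
        have hb : |σ * u ^ 2| ≤ Du := by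
          rw [abs_le]
          constructor <;> [linarith; linarith]
        rw [e2] at hb
        exact hb
      rcases le_or_gt |u| 1 with h1 | h1
      · exact h1.trans hDu1
      · calc |u| ≤ |u| * |u| := le_mul_of_one_le_left (abs_nonneg u) h1.le
          _ = u^2 := by rw [← sq_abs]; ring
          _ ≤ Du := hu2
    have hxnorm : ‖x‖ ≤ M := (pi_norm_le_iff_of_nonneg hM0').2 hpx
    rw [Metric.mem_closedBall, dist_zero_right, Prod.norm_def, Prod.norm_def]
    have hDup : (0:ℝ) ≤ Du := by linarith
    refine max_le ?_ (max_le ?_ ?_)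
    · show ‖u‖ ≤ _
      rw [Real.norm_eq_abs]
      linarith
    · show ‖v‖ ≤ _
      rw [Real.norm_eq_abs]
      linarith
    · linarith
  · -- fiber count
    intro y
    obtain ⟨y₁, y₂, y₃, w⟩ := y
    by_cases hy2 : y₂ = 0
    · -- y₂ = 0 case
      subst hy2
      set S := h ⁻¹' {(y₁, (0:ℝ), y₃, w)} with hS
      set A := {p : ℝ × ℝ × (Fin m → ℝ) | p ∈ S ∧ p.2.1 = 0} with hA
      set B := {p : ℝ × ℝ × (Fin m → ℝ) | p ∈ S ∧ p.1 = 0} with hB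
      have hsub : S ⊆ A ∪ B := by
        rintro ⟨u, v, x⟩ hp
        have hp' := hp
        rw [hmem] at hp'
        obtain ⟨e1, e2, e3, rfl⟩ := hp'
        have h1 : σ * 2 * u * v = 0 := by linarith
        rcases mul_eq_zero.1 h1 with h2 | h2
        · have hu : u = 0 := by
            rcases mul_eq_zero.1 h2 with h3 | h3
            · exact absurd h3 (mul_ne_zero hσ0 two_ne_zero)
            · exact h3
          exact Or.inr ⟨hp, hu⟩
        · exact Or.inl ⟨hp, h2⟩
      -- bound A
      obtain ⟨Afin, Acard⟩ := fiber_le A (fun p => p.1) (C σ * X ^ 2 + C y₃)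
        (fun hz => hσ0 (by
          have := congrArg (fun q => Polynomial.coeff q 2) hz
          simpa [coeff_C] using this))
        (by
          rintro ⟨u, v, x⟩ ⟨hp, hv⟩
          rw [hmem] at hp
          obtain ⟨e1, e2, e3, rfl⟩ := hp
          simp only at hv
          subst hv
          simp only [ne_eq, Nat.succ_ne_zero, not_false_eq_true, zero_pow, mul_zero,
            sub_zero, Nat.add_eq_zero, and_false, Finset.sum_const_zero] at e3
          have e3' : -(σ * u ^ 2) = y₃ := by linarith [e3]
          show Polynomial.eval u (C σ * X ^ 2 + C y₃) = 0
          simp only [eval_add, eval_mul, eval_pow, eval_C, eval_X]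
          linarith)
        (by
          rintro ⟨u, v, x⟩ ⟨hp, hv⟩ ⟨u', v', x'⟩ ⟨hq, hv'⟩ huu
          simp only at hv hv' huu
          rw [hmem] at hp hq
          obtain ⟨-, -, -, rfl⟩ := hp
          obtain ⟨-, -, -, rfl⟩ := hq
          simp only [Prod.mk.injEq]
          exact ⟨huu, hv.trans hv'.symm, trivial⟩)
      have AcardLe : A.ncard ≤ 2 :=
        le_trans Acard (natDegree_add_le_of_degree_le (natDegree_C_mul_X_pow_le σ 2)
          (le_trans (natDegree_C _).le (Nat.zero_le _)))
      -- bound B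
      obtain ⟨Bfin, Bcard⟩ := fiber_le B (fun p => p.2.1)
        (C (((m + 3 : ℕ) : ℝ) - 1) * X ^ (m + 1) +
          (∑ j : Fin m, C (((j : ℕ) + 2 : ℝ) * w j) * X ^ ((j : ℕ) + 1)) + C y₃)
        (by
          intro hz
          have hc := congrArg (fun q => Polynomial.coeff q (m + 1)) hz
          simp only [coeff_add, coeff_C_mul, coeff_X_pow, coeff_C, coeff_zero,
            Polynomial.finset_sum_coeff, if_pos rfl, mul_one] at hc
          rw [Finset.sum_eq_zero (fun j _ => by
            simp only [if_neg (show ¬(m + 1 = (j : ℕ) + 1) by have := j.isLt; omega), mul_zero])] at hc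
          norm_num at hc
          have hnn : (0:ℝ) ≤ (m:ℝ) := Nat.cast_nonneg m
          linarith)
        (by
          rintro ⟨u, v, x⟩ ⟨hp, hu⟩
          rw [hmem] at hp
          obtain ⟨e1, e2, e3, rfl⟩ := hp
          simp only at hu
          subst hu
          show Polynomial.eval v _ = 0
          simp only [eval_add, eval_mul, eval_pow, eval_C, eval_X, Polynomial.eval_finset_sum]
          linear_combination -e3)
        (by
          rintro ⟨u, v, x⟩ ⟨hp, hu⟩ ⟨u', v', x'⟩ ⟨hq, hu'⟩ hvv
          simp only at hu hu' hvv
          rw [hmem] at hp hq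
          obtain ⟨-, -, -, rfl⟩ := hp
          obtain ⟨-, -, -, rfl⟩ := hq
          simp only [Prod.mk.injEq]
          exact ⟨hu.trans hu'.symm, hvv, trivial⟩)
      have BcardLe : B.ncard ≤ m + 1 := by
        refine le_trans Bcard ?_
        refine natDegree_add_le_of_degree_le (natDegree_add_le_of_degree_le
          (natDegree_C_mul_X_pow_le _ _) ?_) (le_trans (natDegree_C _).le (Nat.zero_le _))
        exact natDegree_sum_le_of_forall_le _ _ (fun j _ =>
          le_trans (natDegree_C_mul_X_pow_le _ _) (by have := j.isLt; omega))
      have hfinS : S.Finite := (Afin.union Bfin).subset hsub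
      refine ⟨hfinS, ?_⟩
      calc S.ncard ≤ (A ∪ B).ncard := Set.ncard_le_ncard hsub (Afin.union Bfin)
        _ ≤ A.ncard + B.ncard := Set.ncard_union_le A B
        _ ≤ 2 + (m + 1) := add_le_add AcardLe BcardLe
        _ ≤ m + 3 := by omega
    · -- y₂ ≠ 0 case
      obtain ⟨hfin, hcard⟩ := fiber_le (h ⁻¹' {(y₁, y₂, y₃, w)}) (fun p => p.2.1)
        (C (4 * (((m + 3 : ℕ) : ℝ) - 1)) * X ^ (m + 3) +
          (∑ j : Fin m, C (4 * (((j : ℕ) : ℝ) + 2) * w j) * X ^ ((j : ℕ) + 3)) +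
          C (4 * y₃) * X ^ 2 + C (σ * y₂ ^ 2))
        (by
          intro hz
          have hc := congrArg (fun q => Polynomial.eval 0 q) hz
          simp only [eval_add, eval_mul, eval_pow, eval_C, eval_X, eval_zero,
            Polynomial.eval_finset_sum] at hc
          rw [Finset.sum_eq_zero (fun j _ => by
            rw [zero_pow (by omega : (j : ℕ) + 3 ≠ 0)]; ring)] at hc
          rw [zero_pow (by omega : m + 3 ≠ 0)] at hc
          norm_num at hc
          rcases hc with hc | hc
          · exact hσ0 hc
          · exact hy2 hc)
        (by
          rintro ⟨u, v, x⟩ hp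
          rw [hmem] at hp
          obtain ⟨e1, e2, e3, rfl⟩ := hp
          show Polynomial.eval v _ = 0
          simp only [eval_add, eval_mul, eval_pow, eval_C, eval_X, Polynomial.eval_finset_sum]
          have hsum : ∑ j : Fin m, 4 * (((j : ℕ) : ℝ) + 2) * x j * v ^ ((j : ℕ) + 3) =
              (∑ j : Fin m, (((j : ℕ) : ℝ) + 2) * x j * v ^ ((j : ℕ) + 1)) * (4 * v ^ 2) := by
            rw [Finset.sum_mul]
            exact Finset.sum_congr rfl fun j _ => by ring
          rw [← e2, ← e3]
          linear_combination hsum + (4 * σ * u ^ 2 * v ^ 2) * hσ2)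
        (by
          rintro ⟨u, v, x⟩ hp ⟨u', v', x'⟩ hq hvv
          simp only at hvv
          rw [hmem] at hp hq
          obtain ⟨-, e2, -, rfl⟩ := hp
          obtain ⟨-, e2', -, rfl⟩ := hq
          subst hvv
          have hv : v ≠ 0 := by
            intro h0
            subst h0
            apply hy2
            rw [← e2]
            ring
          have huu : u = u' := by
            have hAB : σ * 2 * u * v = σ * 2 * u' * v := by linarith
            have := mul_right_cancel₀ hv hAB
            exact mul_left_cancel₀ (mul_ne_zero hσ0 two_ne_zero) this
          simp [huu])
      refine ⟨hfin, le_trans hcard ?_⟩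
      refine natDegree_add_le_of_degree_le (natDegree_add_le_of_degree_le
        (natDegree_add_le_of_degree_le (natDegree_C_mul_X_pow_le _ _) ?_)
        (le_trans (natDegree_C_mul_X_pow_le _ _) (by omega)))
        (le_trans (natDegree_C _).le (Nat.zero_le _))
      exact natDegree_sum_le_of_forall_le _ _ (fun j _ =>
        le_trans (natDegree_C_mul_X_pow_le _ _) (by have := j.isLt; omega))
  · -- fiber over 0
    have h0 : (0 : ℝ × ℝ × ℝ × (Fin m → ℝ)) = (0, 0, 0, 0) := rfl
    ext p
    obtain ⟨u, v, x⟩ := p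
    rw [Set.mem_singleton_iff, h0]
    rw [show ((u, v, x) ∈ h ⁻¹' {((0:ℝ), (0:ℝ), (0:ℝ), (0 : Fin m → ℝ))}) ↔ _ from
      hmem u v x 0 0 0 0]
    constructor
    · rintro ⟨e1, e2, e3, rfl⟩
      push_cast at e1 e3
      simp only [Pi.zero_apply, mul_zero, zero_mul, Finset.sum_const_zero, add_zero, sub_zero] at e1 e3
      have huv : u * v = 0 := by
        have : σ * (2 * (u * v)) = 0 := by linarith [e2]
        have := (mul_eq_zero.1 this).resolve_left hσ0
        linarith
      have hu0 : u = 0 ∧ v = 0 := by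
        rcases mul_eq_zero.1 huv with hu | hv
        · subst hu
          constructor
          · rfl
          · have : ((m : ℝ) + 2) * v ^ (m + 1) = 0 := by
              simp only [ne_eq, OfNat.ofNat_ne_zero, not_false_eq_true, zero_pow, mul_zero] at e3
              nlinarith [e3]
            have hv : v ^ (m + 1) = 0 := by
              have hm : ((m : ℝ) + 2) ≠ 0 := by positivity
              exact (mul_eq_zero.1 this).resolve_left hm
            exact pow_eq_zero_iff (Nat.succ_ne_zero m) |>.1 hv
        · subst hv
          refine ⟨?_, rfl⟩
          have : σ * u ^ 2 = 0 := by
            simp only [ne_eq, Nat.succ_ne_zero, not_false_eq_true, zero_pow, mul_zero, sub_zero] at e3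
            linarith [e3]
          have := (mul_eq_zero.1 this).resolve_left hσ0
          exact pow_eq_zero_iff two_ne_zero |>.1 this
      simp [Prod.ext_iff, hu0.1, hu0.2]
    · intro hp
      rw [Prod.ext_iff] at hp
      obtain ⟨hu, hp⟩ := hp
      rw [Prod.ext_iff] at hp
      obtain ⟨hv, hx⟩ := hp
      simp only at hu hv hx
      subst hu; subst hv; subst hx
      norm_num [zero_pow]
end

section
/- Fix k ≥ 4 and σ ∈ {±1}. Consider the family of monic real polynomials A_s(v) = G(v)·((v − c)² + s) in v, where G is a fixed monic real polynomial of degree k − 2, c ∈ ℝ, G(c) ≠ 0, and all roots of G are simple and different from the roots of (v−c)² + s for small s ≠ 0. Then the discriminant of A_s, as a function of the real parameter s, vanishes to order exactly one at s = 0: disc(A_s) = C·s + O(s²) with C ≠ 0. -/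
/-!
Over `ℂ` write `(v - c)² + s = (v - c - w)(v - c + w)` with `w² = -s`. The product of
`A_s'` over the roots of `A_s = G · ((v - c)² + s)` splits into `G'(r) · ((r - c)² + s)` over the
roots `r` of `G`, and `G(c ± w) · (±2w)` at the two new roots. Since
`G(c + w) G(c - w) = ∏ ((r - c)² + s)`, the product is `4s · ∏ G'(r) · (∏ ((r - c)² + s))²`:
`s` times a smooth function of `s` whose value at `0` is `4 ∏ G'(r) · G(c)⁴ ≠ 0`, as `G` is
separable and `G(c) ≠ 0`.
-/

open Polynomial Asymptotics Filter Topology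

namespace Polynomial

section Domain

variable {R : Type*} [CommRing R] [IsDomain R]

theorem prod_roots_eval_derivative_mul {p q : R[X]} (hpq : p * q ≠ 0) :
    ((p * q).roots.map fun r => (p * q).derivative.eval r).prod =
      (p.roots.map fun r => p.derivative.eval r * q.eval r).prod *
        (q.roots.map fun r => p.eval r * q.derivative.eval r).prod := by
  rw [roots_mul hpq, Multiset.map_add, Multiset.prod_add]
  congr 2
  · refine Multiset.map_congr rfl fun r hr => ?_
    simp [derivative_mul, (isRoot_of_mem_roots hr).eq_zero]
  · refine Multiset.map_congr rfl fun r hr => ?_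
    simp [derivative_mul, (isRoot_of_mem_roots hr).eq_zero]

theorem prod_roots_eval_mul_derivative_X_sub_C_mul_X_sub_C (p : R[X]) (a b : R) :
    (((X - C a) * (X - C b)).roots.map
        fun r => p.eval r * ((X - C a) * (X - C b)).derivative.eval r).prod =
      -(a - b) ^ 2 * (p.eval a * p.eval b) := by
  rw [roots_mul (mul_ne_zero (X_sub_C_ne_zero a) (X_sub_C_ne_zero b)), roots_X_sub_C,
    roots_X_sub_C]
  simp [derivative_mul]
  ring

theorem prod_roots_eval_derivative_ne_zero {g : R[X]} (hg : g.Separable) :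
    (g.roots.map fun r => g.derivative.eval r).prod ≠ 0 := by
  simp only [Ne, Multiset.prod_eq_zero_iff, Multiset.mem_map, not_exists, not_and]
  intro r hr
  simpa using hg.aeval_derivative_ne_zero (x := r) (by simpa using (isRoot_of_mem_roots hr))

theorem eval_add_mul_eval_sub_of_monic {g : R[X]} (hg : g.Splits) (hm : g.Monic) (c w : R) :
    g.eval (c + w) * g.eval (c - w) = (g.roots.map fun r => (r - c) ^ 2 - w ^ 2).prod := by
  rw [hg.eval_eq_prod_roots_of_monic hm, hg.eval_eq_prod_roots_of_monic hm,
    ← Multiset.prod_map_mul]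
  exact congrArg _ (Multiset.map_congr rfl fun r _ => by ring)

end Domain

theorem prod_roots_eval_derivative_mul_sq_add {K : Type*} [Field K] [IsAlgClosed K] {g : K[X]}
    (hg : g.Monic) (c z : K) :
    ((g * ((X - C c) ^ 2 + C z)).roots.map
        fun r => (g * ((X - C c) ^ 2 + C z)).derivative.eval r).prod =
      4 * z * (g.roots.map fun r => g.derivative.eval r).prod *
        (g.roots.map fun r => (r - c) ^ 2 + z).prod ^ 2 := by
  obtain ⟨w, hw⟩ := IsAlgClosed.exists_pow_nat_eq (-z) two_pos
  have hfactor : (X - C c) ^ 2 + C z = (X - C (c + w)) * (X - C (c - w)) := by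
    rw [show z = -w ^ 2 by rw [hw, neg_neg], C_neg, C_add, C_sub, C_pow]
    ring
  have hpair : g.eval (c + w) * g.eval (c - w) = (g.roots.map fun r => (r - c) ^ 2 + z).prod := by
    simp only [eval_add_mul_eval_sub_of_monic (IsAlgClosed.splits g) hg, hw, sub_neg_eq_add]
  have hq : (X - C c) ^ 2 + C z ≠ 0 :=
    hfactor ▸ mul_ne_zero (X_sub_C_ne_zero _) (X_sub_C_ne_zero _)
  rw [prod_roots_eval_derivative_mul (mul_ne_zero hg.ne_zero hq), Multiset.prod_map_mul]
  simp only [eval_add, eval_pow, eval_sub, eval_X, eval_C]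
  rw [hfactor, prod_roots_eval_mul_derivative_X_sub_C_mul_X_sub_C, hpair]
  linear_combination -4 * (g.roots.map fun r => g.derivative.eval r).prod *
    (g.roots.map fun r => (r - c) ^ 2 + z).prod ^ 2 * hw

end Polynomial

theorem differentiable_multiset_prod_add {𝕜 ι : Type*} [NontriviallyNormedField 𝕜]
    (u : Multiset ι) (a : ι → 𝕜) : Differentiable 𝕜 fun z => (u.map fun i => a i + z).prod := by
  classical
  exact fun z => (HasFDerivAt.multiset_prod (g := fun i z => a i + z)
    fun i _ => (hasFDerivAt_id z).const_add (a i)).differentiableAt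

theorem isBigO_ofReal_mul_sub_mul {f : ℂ → ℂ} (hf : DifferentiableAt ℂ f 0) :
    (fun s : ℝ => (s : ℂ) * f s - f 0 * s) =O[𝓝 0] fun s => (s : ℂ) ^ 2 := by
  have hlin : (fun z => f z - f 0) =O[𝓝 0] fun z => z := by
    simpa using hf.hasDerivAt.isBigO_sub
  have hreal := hlin.comp_tendsto (Complex.continuous_ofReal.tendsto' 0 0 Complex.ofReal_zero)
  exact ((isBigO_refl (fun s : ℝ => (s : ℂ)) _).mul hreal).congr (fun s => by simp; ring)
    (fun s => by simp; ring)

theorem isBigO_prod_roots_eval_derivative_mul_sq_add_sub {g : ℂ[X]} (hg : g.Monic) (c : ℂ) :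
    (fun s : ℝ => ((g * ((X - C c) ^ 2 + C (s : ℂ))).roots.map
        fun r => (g * ((X - C c) ^ 2 + C (s : ℂ))).derivative.eval r).prod -
      4 * (g.roots.map fun r => g.derivative.eval r).prod * g.eval c ^ 4 * s)
      =O[𝓝 0] fun s => (s : ℂ) ^ 2 := by
  set f : ℂ → ℂ := fun z => 4 * (g.roots.map fun r => g.derivative.eval r).prod *
    (g.roots.map fun r => (r - c) ^ 2 + z).prod ^ 2
  have hf0 : f 0 = 4 * (g.roots.map fun r => g.derivative.eval r).prod * g.eval c ^ 4 := by
    have hc := eval_add_mul_eval_sub_of_monic (IsAlgClosed.splits g) hg c 0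
    simp only [add_zero, sub_zero, zero_pow two_ne_zero] at hc
    simp only [f, add_zero, ← hc]
    ring
  have hf : DifferentiableAt ℂ f 0 :=
    (((differentiable_multiset_prod_add _ _).pow 2).const_mul _).differentiableAt
  refine (isBigO_ofReal_mul_sub_mul hf).congr_left fun s => ?_
  rw [prod_roots_eval_derivative_mul_sq_add hg, hf0]
  ring

theorem Dk_disc_order_one_general (k : ℕ)
    (G : Polynomial ℝ) (hG : G.Monic)
    (c : ℝ) (hGc : G.eval c ≠ 0) (hsq : Squarefree G) :
    ∃ C₀ : ℂ, C₀ ≠ 0 ∧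
      (fun s : ℝ =>
          (((G * ((X - Polynomial.C c) ^ 2 + Polynomial.C s)).map
              (algebraMap ℝ ℂ)).roots.map
            (fun r => (((G * ((X - Polynomial.C c) ^ 2 + Polynomial.C s)).map
              (algebraMap ℝ ℂ)).derivative).eval r)).prod *
            (-1 : ℂ) ^ (k * (k - 1) / 2) - C₀ * s)
        =O[nhds (0 : ℝ)] fun s => (s : ℂ) ^ 2 := by
  set g := G.map (algebraMap ℝ ℂ)
  have hmap (s : ℝ) : (G * ((X - C c) ^ 2 + C s)).map (algebraMap ℝ ℂ) =
      g * ((X - C (c : ℂ)) ^ 2 + C (s : ℂ)) := by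
    simp [g, Polynomial.map_mul]
  have hgc : g.eval (c : ℂ) ≠ 0 := by
    rw [eval_map_algebraMap, show (c : ℂ) = algebraMap ℝ ℂ c from rfl,
      aeval_algebraMap_apply_eq_algebraMap_eval]
    exact (_root_.map_ne_zero _).mpr hGc
  have hsep : g.Separable := (PerfectField.separable_iff_squarefree.mpr hsq).map
  refine ⟨4 * (g.roots.map fun r => g.derivative.eval r).prod * g.eval (c : ℂ) ^ 4 *
    (-1) ^ (k * (k - 1) / 2), by simp [prod_roots_eval_derivative_ne_zero hsep, hgc], ?_⟩
  refine ((isBigO_prod_roots_eval_derivative_mul_sq_add_sub (hG.map (algebraMap ℝ ℂ)) c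
    ).const_mul_left ((-1) ^ (k * (k - 1) / 2))).congr_left fun s => ?_
  rw [hmap]
  ring

/-- For the family `A_s(v) = G(v)·((v−c)² + s)` with `G` monic of degree `k−2`,
`G(c) ≠ 0`, all roots of `G` simple and distinct from the roots of `(v−c)²+s`
for small `s ≠ 0`, the discriminant of `A_s` (expressed as
`(−1)^{d(d−1)/2} ∏_{r} A_s'(r)` over the complex roots of `A_s`)
vanishes to order exactly one at `s = 0`: `disc(A_s) = C·s + O(s²)`, `C ≠ 0`. -/
theorem Dk_disc_order_one (k : ℕ) (hk : 4 ≤ k) (σ : ℝ) (hσ : σ = 1 ∨ σ = -1)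
    (G : Polynomial ℝ) (hG : G.Monic) (hdeg : G.natDegree = k - 2)
    (c : ℝ) (hGc : G.eval c ≠ 0) (hsq : Squarefree G)
    (hdisj : ∃ ε > 0, ∀ s : ℝ, s ≠ 0 → |s| < ε → ∀ r : ℂ,
        Polynomial.aeval r G = 0 → (r - (c : ℂ)) ^ 2 + (s : ℂ) ≠ 0) :
    ∃ C₀ : ℂ, C₀ ≠ 0 ∧
      (fun s : ℝ =>
          (((G * ((X - Polynomial.C c) ^ 2 + Polynomial.C s)).map
              (algebraMap ℝ ℂ)).roots.map
            (fun r => (((G * ((X - Polynomial.C c) ^ 2 + Polynomial.C s)).map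
              (algebraMap ℝ ℂ)).derivative).eval r)).prod *
            (-1 : ℂ) ^ (k * (k - 1) / 2) - C₀ * s)
        =O[nhds (0 : ℝ)] fun s => (s : ℂ) ^ 2 :=
  Dk_disc_order_one_general k G hG c hGc hsq
end
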